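/- arXiv:2406.10730 — 14 statements merged into one kernel-verified Lean document; each statement's English description precedes it below -/
import Mathlib

section
/- If a preordered space has a Debreu separable countable subset (i.e., for all x ≺ y there exists d in the countable set with x ≼ d ≼ y), then the preorder admits a strict monotone, i.e., a real-valued function f with x ≼ y implying f(x) ≤ f(y) and x ≺ y implying f(x) < f(y). -/
/-!
Give the points of the countable Debreu dense set `D` positive weights of finite sum, and let
`f x` be the total weight of the points of `D` below `x` minus the total weight of those above `x`.
By transitivity, moving up from `x` to `y` can only add points below and remove points above,
so `f` is monotone. If `x ≺ y`, a point `d ∈ D` with `x ≼ d ≼ y` is either below `x`, and then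
it is above `x` but not above `y`, or it is not below `x`, and then it is below `y` but not
below `x`; in both cases its weight makes `f x < f y`.
-/

open Set

section IndicatorSum

variable {ι : Type*} {w : ι → ℝ}

theorem tsum_indicator_le_tsum_indicator (hw : Summable w) (hw0 : 0 ≤ w) {s t : Set ι}
    (hst : s ⊆ t) : ∑' i, s.indicator w i ≤ ∑' i, t.indicator w i :=
  (hw.indicator s).tsum_le_tsum (indicator_le_indicator_of_subset hst hw0) (hw.indicator t)

theorem tsum_indicator_lt_tsum_indicator (hw : Summable w) (hw0 : 0 ≤ w) {s t : Set ι}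
    (hst : s ⊆ t) {i : ι} (hit : i ∈ t) (his : i ∉ s) (hwi : 0 < w i) :
    ∑' i, s.indicator w i < ∑' i, t.indicator w i := by
  refine (hw.indicator s).tsum_lt_tsum (indicator_le_indicator_of_subset hst hw0) (i := i) ?_
    (hw.indicator t)
  simpa [indicator_of_mem hit, indicator_of_notMem his] using hwi

end IndicatorSum

section DebreuUtility

variable {X : Type*} (r : X → X → Prop) {D : Set X} (w : D → ℝ)

noncomputable def debreuUtility (x : X) : ℝ :=
  ∑' d, {d : D | r d x}.indicator w d - ∑' d, {d : D | r x d}.indicator w d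

variable {r w}

theorem debreuUtility_le_debreuUtility (htrans : ∀ x y z, r x y → r y z → r x z)
    (hw : Summable w) (hw0 : 0 ≤ w) {x y : X} (hxy : r x y) :
    debreuUtility r w x ≤ debreuUtility r w y :=
  sub_le_sub
    (tsum_indicator_le_tsum_indicator hw hw0 fun _ hdx => htrans _ _ _ hdx hxy)
    (tsum_indicator_le_tsum_indicator hw hw0 fun _ hyd => htrans _ _ _ hxy hyd)

theorem debreuUtility_lt_debreuUtility (htrans : ∀ x y z, r x y → r y z → r x z)
    (hw : Summable w) (hw_pos : ∀ d, 0 < w d) {x y : X} (hyx : ¬ r y x) {d : D}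
    (hxd : r x d) (hdy : r d y) :
    debreuUtility r w x < debreuUtility r w y := by
  have hw0 : 0 ≤ w := fun d => (hw_pos d).le
  have hxy : r x y := htrans _ _ _ hxd hdy
  refine sub_lt_sub_iff.mpr ?_
  by_cases hdx : r d x
  · have hyd : ¬ r y d := fun hyd => hyx (htrans _ _ _ hyd hdx)
    exact add_lt_add_of_le_of_lt
      (tsum_indicator_le_tsum_indicator hw hw0 fun _ hex => htrans _ _ _ hex hxy)
      (tsum_indicator_lt_tsum_indicator hw hw0 (fun _ hye => htrans _ _ _ hxy hye) hxd hyd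
        (hw_pos d))
  · exact add_lt_add_of_lt_of_le
      (tsum_indicator_lt_tsum_indicator hw hw0 (fun _ hex => htrans _ _ _ hex hxy) hdy hdx
        (hw_pos d))
      (tsum_indicator_le_tsum_indicator hw hw0 fun _ hye => htrans _ _ _ hxy hye)

end DebreuUtility

theorem debreu_separable_has_strict_monotone_general {X : Type*} (le : X → X → Prop)
    (htrans : ∀ x y z, le x y → le y z → le x z)
    (D : Set X) (hD : D.Countable)
    (hdense : ∀ x y, le x y → ¬ le y x → ∃ d ∈ D, le x d ∧ le d y) :
    ∃ f : X → ℝ, (∀ x y, le x y → f x ≤ f y) ∧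
      (∀ x y, le x y → ¬ le y x → f x < f y) := by
  obtain ⟨w, hw_pos, _, hw_sum, -⟩ := hD.exists_pos_hasSum_le one_pos
  refine ⟨debreuUtility le (fun d : D => w d),
    fun x y hxy => debreuUtility_le_debreuUtility htrans hw_sum.summable
      (fun d => (hw_pos d).le) hxy,
    fun x y hxy hyx => ?_⟩
  obtain ⟨d, hd, hxd, hdy⟩ := hdense x y hxy hyx
  exact debreuUtility_lt_debreuUtility (d := ⟨d, hd⟩) htrans hw_sum.summable
    (fun d => hw_pos d) hyx hxd hdy

/-- A Debreu separable preorder admits a strict monotone. -/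
theorem debreu_separable_has_strict_monotone {X : Type*} (le : X → X → Prop)
    (hrefl : ∀ x, le x x) (htrans : ∀ x y z, le x y → le y z → le x z)
    (D : Set X) (hD : D.Countable)
    (hdense : ∀ x y, le x y → ¬ le y x → ∃ d ∈ D, le x d ∧ le d y) :
    ∃ f : X → ℝ, (∀ x y, le x y → f x ≤ f y) ∧
      (∀ x y, le x y → ¬ le y x → f x < f y) :=
  debreu_separable_has_strict_monotone_general le htrans D hD hdense
end

section
/- A preordered space (X,≼) admits an injective monotone if and only if there exists a countable family of increasing subsets (A_n) such that for all x,y with x ≺ y some A_n separates x from y (x ∉ A_n and y ∈ A_n), and for all incomparable x,y some A_n separates either x from y or y from x. -/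
/-!
An injective monotone `f` yields the family of superlevel sets `{x | q < f x}`, `q ∈ ℚ`: a rational
strictly between `f x` and `f y` separates `x` from `y`, and `f x ≠ f y` unless `x ~ y`.
Conversely, code each `x` by its membership sequence `(x ∈ A n)ₙ` and take the Cantor function
`∑ₙ [x ∈ A n] 3⁻ⁿ`. It is monotone because the `A n` are increasing, and injective on sequences
since `3⁻¹ < 1/2`, so equal values force `x` and `y` to lie in exactly the same `A n`; the separation
properties then exclude `x ≺ y`, `y ≺ x` and `x ⋈ y`.
-/

open Cardinal

section

variable {X : Type*}

def ratSuperlevelSet (f : X → ℝ) (n : ℕ) : Set X :=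
  {x | (((Denumerable.eqv ℚ).symm n : ℚ) : ℝ) < f x}

lemma mem_ratSuperlevelSet_of_le {le : X → X → Prop} {f : X → ℝ}
    (hf : ∀ x y, le x y → f x ≤ f y) (n : ℕ) :
    ∀ x ∈ ratSuperlevelSet f n, ∀ y, le x y → y ∈ ratSuperlevelSet f n :=
  fun x hx y hxy => lt_of_lt_of_le hx (hf x y hxy)

lemma exists_ratSuperlevelSet_separating {f : X → ℝ} {x y : X} (h : f x < f y) :
    ∃ n, x ∉ ratSuperlevelSet f n ∧ y ∈ ratSuperlevelSet f n := by
  obtain ⟨q, hxq, hqy⟩ := exists_rat_btwn h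
  obtain ⟨n, rfl⟩ := (Denumerable.eqv ℚ).symm.surjective q
  exact ⟨n, not_lt.mpr hxq.le, hqy⟩

lemma le_and_le_of_forall_mem_iff {le : X → X → Prop} {A : ℕ → Set X}
    (hsep_lt : ∀ x y, le x y → ¬ le y x → ∃ n, x ∉ A n ∧ y ∈ A n)
    (hsep_incomp : ∀ x y, ¬ le x y → ¬ le y x →
      ∃ n, (x ∉ A n ∧ y ∈ A n) ∨ (y ∉ A n ∧ x ∈ A n))
    {x y : X} (h : ∀ n, x ∈ A n ↔ y ∈ A n) : le x y ∧ le y x := by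
  by_contra hne
  suffices ∃ n, ¬ (x ∈ A n ↔ y ∈ A n) from this.elim fun n hn => hn (h n)
  by_cases hxy : le x y
  · obtain ⟨n, hn⟩ := hsep_lt x y hxy fun hyx => hne ⟨hxy, hyx⟩
    exact ⟨n, by tauto⟩
  by_cases hyx : le y x
  · obtain ⟨n, hn⟩ := hsep_lt y x hyx hxy
    exact ⟨n, by tauto⟩
  obtain ⟨n, hn⟩ := hsep_incomp x y hxy hyx
  exact ⟨n, by tauto⟩

end

theorem injective_monotone_iff_increasing_family_general {X : Type*} (le : X → X → Prop) :
    (∃ f : X → ℝ, (∀ x y, le x y → f x ≤ f y) ∧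
        (∀ x y, f x = f y → le x y ∧ le y x)) ↔
      (∃ A : ℕ → Set X,
        (∀ n, ∀ x ∈ A n, ∀ y, le x y → y ∈ A n) ∧
        (∀ x y, le x y → ¬ le y x → ∃ n, x ∉ A n ∧ y ∈ A n) ∧
        (∀ x y, ¬ le x y → ¬ le y x →
          ∃ n, (x ∉ A n ∧ y ∈ A n) ∨ (y ∉ A n ∧ x ∈ A n))) := by
  constructor
  · rintro ⟨f, hmono, hinj⟩
    refine ⟨ratSuperlevelSet f, mem_ratSuperlevelSet_of_le hmono, fun x y hxy hyx => ?_,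
      fun x y hxy _ => ?_⟩
    · exact exists_ratSuperlevelSet_separating <|
        (hmono x y hxy).lt_of_ne fun h => hyx (hinj x y h).2
    · rcases (show f x ≠ f y from fun h => hxy (hinj x y h).1).lt_or_gt with h | h
      · exact (exists_ratSuperlevelSet_separating h).imp fun _ => Or.inl
      · exact (exists_ratSuperlevelSet_separating h).imp fun _ => Or.inr
  · rintro ⟨A, hA, hsep_lt, hsep_incomp⟩
    classical
    let code : X → ℕ → Bool := fun x n => decide (x ∈ A n)
    refine ⟨fun x => cantorFunction (1 / 3) (code x), fun x y hxy => ?_, fun x y hxy => ?_⟩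
    · refine cantorFunction_le (by norm_num) (by norm_num) fun n hx => ?_
      simpa [code] using hA n x (by simpa [code] using hx) y hxy
    · have hcode := cantorFunction_injective (by norm_num) (by norm_num) hxy
      exact le_and_le_of_forall_mem_iff hsep_lt hsep_incomp fun n => by
        simpa [code] using congrFun hcode n

/-- Injective monotones exist iff there is a countable family of increasing
sets separating strictly related pairs and (one-sidedly) incomparable pairs. -/
theorem injective_monotone_iff_increasing_family {X : Type*} (le : X → X → Prop)
    (hrefl : ∀ x, le x x) (htrans : ∀ x y z, le x y → le y z → le x z) :
    (∃ f : X → ℝ, (∀ x y, le x y → f x ≤ f y) ∧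
        (∀ x y, f x = f y → le x y ∧ le y x)) ↔
      (∃ A : ℕ → Set X,
        (∀ n, ∀ x ∈ A n, ∀ y, le x y → y ∈ A n) ∧
        (∀ x y, le x y → ¬ le y x → ∃ n, x ∉ A n ∧ y ∈ A n) ∧
        (∀ x y, ¬ le x y → ¬ le y x →
          ∃ n, (x ∉ A n ∧ y ∈ A n) ∨ (y ∉ A n ∧ x ∈ A n))) :=
  injective_monotone_iff_increasing_family_general le
end

section
/- If a preordered space has a countable multi-utility, then it admits an injective monotone. -/
/-!
Encode `x` by its set of rational cuts `{(n, q) | q < uₙ x}`. By density of `ℚ`, `x ≼ y` exactly when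
the cut set of `x` is contained in that of `y`. The cut sets live in the countable set `ℕ × ℚ`, and a
Cantor-type series maps the subsets of a countable set monotonically and injectively into `ℝ`.
-/

open Set Function

def rationalCuts {ι X : Type*} (u : ι → X → ℝ) (x : X) : Set (ι × ℚ) :=
  {p | (p.2 : ℝ) < u p.1 x}

theorem rationalCuts_subset_iff {ι X : Type*} {u : ι → X → ℝ} {x y : X} :
    rationalCuts u x ⊆ rationalCuts u y ↔ ∀ i, u i x ≤ u i y := by
  refine ⟨fun h i => ?_, fun h p hp => lt_of_lt_of_le hp (h p.1)⟩
  by_contra! hlt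
  obtain ⟨q, hyq, hqx⟩ := exists_rat_btwn hlt
  exact (h (show (i, q) ∈ rationalCuts u x from hqx)).not_gt hyq

theorem exists_monotone_injective_set_nat : ∃ φ : Set ℕ → ℝ, Monotone φ ∧ Injective φ := by
  classical
  refine ⟨fun s => Cardinal.cantorFunction (1 / 3) fun n => decide (n ∈ s), ?_, ?_⟩
  · intro s t hst
    refine Cardinal.cantorFunction_le (by norm_num) (by norm_num) fun n hn => ?_
    simpa using hst (by simpa using hn)
  · intro s t hst
    ext n
    simpa using congrFun (Cardinal.cantorFunction_injective (by norm_num) (by norm_num) hst) n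

theorem exists_monotone_injective_set_of_countable (α : Type*) [Countable α] :
    ∃ φ : Set α → ℝ, Monotone φ ∧ Injective φ := by
  obtain ⟨e, he⟩ := Countable.exists_injective_nat α
  obtain ⟨φ, hmono, hinj⟩ := exists_monotone_injective_set_nat
  exact ⟨φ ∘ image e, hmono.comp monotone_image, hinj.comp (image_injective.mpr he)⟩

theorem countable_multiutility_gives_injective_monotone_general {X : Type*} (le : X → X → Prop)
    (u : ℕ → X → ℝ) (hu : ∀ x y, le x y ↔ ∀ n, u n x ≤ u n y) :
    ∃ f : X → ℝ, (∀ x y, le x y → f x ≤ f y) ∧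
      (∀ x y, f x = f y → le x y ∧ le y x) := by
  obtain ⟨φ, hmono, hinj⟩ := exists_monotone_injective_set_of_countable (ℕ × ℚ)
  have hle : ∀ x y, le x y ↔ rationalCuts u x ⊆ rationalCuts u y := fun x y =>
    (hu x y).trans rationalCuts_subset_iff.symm
  refine ⟨φ ∘ rationalCuts u, fun x y hxy => hmono ((hle x y).mp hxy), fun x y hxy => ?_⟩
  have hcuts : rationalCuts u x = rationalCuts u y := hinj hxy
  exact ⟨(hle x y).mpr hcuts.le, (hle y x).mpr hcuts.ge⟩

/-- A preorder with a countable multi-utility admits an injective monotone. -/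
theorem countable_multiutility_gives_injective_monotone {X : Type*} (le : X → X → Prop)
    (hrefl : ∀ x, le x x) (htrans : ∀ x y z, le x y → le y z → le x z)
    (u : ℕ → X → ℝ) (hu : ∀ x y, le x y ↔ ∀ n, u n x ≤ u n y) :
    ∃ f : X → ℝ, (∀ x y, le x y → f x ≤ f y) ∧
      (∀ x y, f x = f y → le x y ∧ le y x) :=
  countable_multiutility_gives_injective_monotone_general le u hu
end

section
/- If a preordered space (X,≼) is Debreu upper separable, then it has a countable multi-utility. -/
/-!
Each point `d` gives two monotone `{0,1}`-valued functions, the indicators of the upper set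
`{x | d ≼ x}` and of the complement of the lower set `{x | x ≼ d}`. If `x ⋠ y`, then either
`y ≺ x`, and a point `y ≼ d ≼ x` of `D` is separated from `x` or from `y` by one of the two,
since otherwise `x ≼ d ≼ y`; or `x ⋈ y`, and a point `d ⋈ y` with `d ≼ x` is separated by the
first. Indicators at the points of the countable set `D` thus form a countable multi-utility.
-/

section

variable {X : Type*}

theorem Set.indicator_one_le_indicator_one {S : Set X} {x y : X} (h : x ∈ S → y ∈ S) :
    S.indicator (1 : X → ℝ) x ≤ S.indicator 1 y := by
  by_cases hx : x ∈ S
  · simp [hx, h hx]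
  · simp only [Set.indicator_of_notMem hx]
    exact Set.indicator_nonneg (fun _ _ => zero_le_one) y

theorem Set.indicator_one_lt_indicator_one {S : Set X} {x y : X} (hx : x ∉ S) (hy : y ∈ S) :
    S.indicator (1 : X → ℝ) x < S.indicator 1 y := by
  simp [hx, hy]

noncomputable def pointIndicator (le : X → X → Prop) : X ⊕ X → X → ℝ
  | .inl d => {x | le d x}.indicator 1
  | .inr d => {x | ¬ le x d}.indicator 1

theorem pointIndicator_mono {le : X → X → Prop} (htrans : ∀ x y z, le x y → le y z → le x z)
    (i : X ⊕ X) {x y : X} (hxy : le x y) : pointIndicator le i x ≤ pointIndicator le i y := by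
  cases i with
  | inl d => exact Set.indicator_one_le_indicator_one fun hdx => htrans _ _ _ hdx hxy
  | inr d => exact Set.indicator_one_le_indicator_one fun hxd hyd => hxd (htrans _ _ _ hxy hyd)

theorem exists_separating_point {le : X → X → Prop}
    (htrans : ∀ x y z, le x y → le y z → le x z) {D : Set X}
    (hDebreuDense : ∀ x y, le x y → ¬ le y x → ∃ d ∈ D, le x d ∧ le d y)
    (hDebreuUpperDense : ∀ x y, ¬ le x y → ¬ le y x → ∃ d ∈ D, (¬ le x d ∧ ¬ le d x) ∧ le d y)
    {x y : X} (hxy : ¬ le x y) :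
    ∃ d ∈ D, (le d x ∧ ¬ le d y) ∨ (le y d ∧ ¬ le x d) := by
  by_cases hyx : le y x
  · obtain ⟨d, hd, hyd, hdx⟩ := hDebreuDense y x hyx hxy
    by_cases hdy : le d y
    · exact ⟨d, hd, .inr ⟨hyd, fun hxd => hxy (htrans _ _ _ hxd hdy)⟩⟩
    · exact ⟨d, hd, .inl ⟨hdx, hdy⟩⟩
  · obtain ⟨d, hd, ⟨-, hdy⟩, hdx⟩ := hDebreuUpperDense y x hyx hxy
    exact ⟨d, hd, .inl ⟨hdx, hdy⟩⟩

theorem exists_nat_multiutility_of_countable {ι : Type*} [Countable ι] {le : X → X → Prop}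
    (v : ι → X → ℝ) (hv : ∀ x y, le x y ↔ ∀ i, v i x ≤ v i y) :
    ∃ u : ℕ → X → ℝ, ∀ x y, le x y ↔ ∀ n, u n x ≤ u n y := by
  -- `Option ι` is nonempty even when `ι` is not; `none` indexes the harmless utility `0`.
  obtain ⟨f, hf⟩ := exists_surjective_nat (Option ι)
  let w : Option ι → X → ℝ := fun o => o.elim 0 v
  refine ⟨fun n => w (f n), fun x y => (hv x y).trans ⟨fun h n => ?_, fun h i => ?_⟩⟩
  · show w (f n) x ≤ w (f n) y
    cases f n with
    | none => exact le_rfl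
    | some i => exact h i
  · obtain ⟨n, hn⟩ := hf (some i)
    simpa [w, hn] using h n

theorem le_iff_forall_pointIndicator_le {le : X → X → Prop}
    (htrans : ∀ x y z, le x y → le y z → le x z) {D : Set X}
    (hsep : ∀ x y, ¬ le x y → ∃ d ∈ D, (le d x ∧ ¬ le d y) ∨ (le y d ∧ ¬ le x d)) (x y : X) :
    le x y ↔ ∀ i : D ⊕ D, pointIndicator le (Sum.map (↑) (↑) i) x ≤
      pointIndicator le (Sum.map (↑) (↑) i) y := by
  refine ⟨fun hxy i => pointIndicator_mono htrans _ hxy, fun h => ?_⟩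
  by_contra hxy
  obtain ⟨d, hd, ⟨hdx, hdy⟩ | ⟨hyd, hxd⟩⟩ := hsep x y hxy
  · exact (h (.inl ⟨d, hd⟩)).not_gt (Set.indicator_one_lt_indicator_one hdy hdx)
  · exact (h (.inr ⟨d, hd⟩)).not_gt (Set.indicator_one_lt_indicator_one (not_not.2 hyd) hxd)

end

theorem debreu_upper_separable_has_countable_multiutility_general {X : Type*} (le : X → X → Prop)
    (htrans : ∀ x y z, le x y → le y z → le x z)
    (D : Set X) (hD : D.Countable)
    (hDebreuDense : ∀ x y, le x y → ¬ le y x → ∃ d ∈ D, le x d ∧ le d y)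
    (hDebreuUpperDense : ∀ x y, ¬ le x y → ¬ le y x →
      ∃ d ∈ D, (¬ le x d ∧ ¬ le d x) ∧ le d y) :
    ∃ u : ℕ → X → ℝ, ∀ x y, le x y ↔ ∀ n, u n x ≤ u n y := by
  have : Countable D := hD.to_subtype
  exact exists_nat_multiutility_of_countable _ <| le_iff_forall_pointIndicator_le htrans
    fun _ _ => exists_separating_point htrans hDebreuDense hDebreuUpperDense

/-- A Debreu upper separable preorder has a countable multi-utility. -/
theorem debreu_upper_separable_has_countable_multiutility {X : Type*} (le : X → X → Prop)
    (hrefl : ∀ x, le x x) (htrans : ∀ x y z, le x y → le y z → le x z)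
    (D : Set X) (hD : D.Countable)
    (hDebreuDense : ∀ x y, le x y → ¬ le y x → ∃ d ∈ D, le x d ∧ le d y)
    (hDebreuUpperDense : ∀ x y, ¬ le x y → ¬ le y x →
      ∃ d ∈ D, (¬ le x d ∧ ¬ le d x) ∧ le d y) :
    ∃ u : ℕ → X → ℝ, ∀ x y, le x y ↔ ∀ n, u n x ≤ u n y :=
  debreu_upper_separable_has_countable_multiutility_general le htrans D hD hDebreuDense
    hDebreuUpperDense
end

section
/- There exists a Debreu separable preordered space with no countable multi-utility; concretely, X = [0,1] ∪ [2,3] with x ≼ y iff (x,y ∈ [0,1] and x ≤ y) or (x ∈ [2,3], y ∈ [0,1], and x−2 < y) (together with reflexivity) is Debreu separable but has no countable multi-utility. -/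
/-!
Reflexivity and transitivity are a case check, and rationals interpolate every strict comparison,
since `x ≺ y` forces `y ∈ [0,1]`.  For the negative part, the lower points `t ∈ [0,1]` and the
upper points `t + 2` form an uncountable staircase: `t + 2 ⋠ t`, while `t + 2 ≼ s` for `t < s`.
A multi-utility `(uₙ)` must witness `t + 2 ⋠ t` by some `n` with `uₙ t < uₙ (t + 2)`; for a fixed
`n` the open intervals `(uₙ t, uₙ (t + 2))` so obtained are pairwise disjoint, hence countably many,
so countably many `n` cannot cover `[0,1]`.
-/

open Set

/-- The ground set `[0,1] ∪ [2,3]`. -/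
def X6 : Type := {x : ℝ // x ∈ Icc (0:ℝ) 1 ∪ Icc (2:ℝ) 3}

/-- The preorder: `x ≼ y` iff (`x,y ∈ [0,1]` and `x ≤ y`) or
(`x ∈ [2,3]`, `y ∈ [0,1]` and `x - 2 < y`), together with reflexivity. -/
def le6 (x y : X6) : Prop :=
  x = y ∨ (x.1 ∈ Icc (0:ℝ) 1 ∧ y.1 ∈ Icc (0:ℝ) 1 ∧ x.1 ≤ y.1) ∨
    (x.1 ∈ Icc (2:ℝ) 3 ∧ y.1 ∈ Icc (0:ℝ) 1 ∧ x.1 - 2 < y.1)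

section Staircase

variable {α β X ι : Type*} [LinearOrder α]

theorem Set.countable_of_stacked_intervals [LinearOrder β] [TopologicalSpace β] [OrderTopology β]
    [DenselyOrdered β] [TopologicalSpace.SeparableSpace β] {S : Set α} {a b : α → β}
    (hab : ∀ t ∈ S, a t < b t) (hba : ∀ t ∈ S, ∀ s ∈ S, t < s → b t ≤ a s) : S.Countable := by
  have hdisj : S.PairwiseDisjoint fun t => Ioo (a t) (b t) := by
    have key : ∀ t ∈ S, ∀ s ∈ S, t < s → Disjoint (Ioo (a t) (b t)) (Ioo (a s) (b s)) :=
      fun t ht s hs hts => disjoint_left.2 fun _ hz hz' =>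
        lt_asymm (hz.2.trans_le (hba t ht s hs hts)) hz'.1
    intro t ht s hs hne
    rcases hne.lt_or_gt with h | h
    · exact key t ht s hs h
    · exact (key s hs t ht h).symm
  exact hdisj.countable_of_isOpen (fun _ _ => isOpen_Ioo) fun t ht => nonempty_Ioo.2 (hab t ht)

def IsMultiUtility (r : X → X → Prop) (u : ι → X → ℝ) : Prop :=
  ∀ x y, r x y ↔ ∀ n, u n x ≤ u n y

theorem IsMultiUtility.countable_of_staircase [Countable ι] {r : X → X → Prop} {u : ι → X → ℝ}
    (hu : IsMultiUtility r u) {f g : α → X} (hgf : ∀ t, ¬ r (g t) (f t))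
    (hfg : ∀ ⦃t s⦄, t < s → r (g t) (f s)) : Countable α := by
  let S : ι → Set α := fun n => {t | u n (f t) < u n (g t)}
  have hcover : ⋃ n, S n = univ := by
    refine eq_univ_of_forall fun t => mem_iUnion.2 ?_
    simpa [S, hu (g t) (f t)] using hgf t
  have hS : ∀ n, (S n).Countable := fun n =>
    countable_of_stacked_intervals (fun _ ht => ht) fun _ _ _ _ hts => (hu _ _).1 (hfg hts) n
  rw [← countable_univ_iff, ← hcover]
  exact countable_iUnion hS

end Staircase

theorem Real.not_countable_Icc {a b : ℝ} (hab : a < b) : ¬ (Icc a b).Countable := fun h =>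
  hab.not_ge (by simpa [Real.volume_Icc] using h.measure_zero MeasureTheory.volume)

theorem disjoint_Icc_zero_one_Icc_two_three : Disjoint (Icc (0 : ℝ) 1) (Icc 2 3) :=
  disjoint_left.2 fun _ h h' => by linarith [h.2, h'.1]

theorem le6_trans {x y z : X6} (hxy : le6 x y) (hyz : le6 y z) : le6 x z := by
  rcases hxy with rfl | ⟨hx, hy₁, hxy⟩ | ⟨hx, hy₁, hxy⟩
  · exact hyz
  · rcases hyz with rfl | ⟨_, hz, hyz⟩ | ⟨hy₂, _, _⟩
    · exact Or.inr (Or.inl ⟨hx, hy₁, hxy⟩)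
    · exact Or.inr (Or.inl ⟨hx, hz, hxy.trans hyz⟩)
    · exact absurd hy₂ (disjoint_left.1 disjoint_Icc_zero_one_Icc_two_three hy₁)
  · rcases hyz with rfl | ⟨_, hz, hyz⟩ | ⟨hy₂, _, _⟩
    · exact Or.inr (Or.inr ⟨hx, hy₁, hxy⟩)
    · exact Or.inr (Or.inr ⟨hx, hz, hxy.trans_le hyz⟩)
    · exact absurd hy₂ (disjoint_left.1 disjoint_Icc_zero_one_Icc_two_three hy₁)

def X6.rationalPoints : Set X6 := Subtype.val ⁻¹' range ((↑) : ℚ → ℝ)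

theorem X6.countable_rationalPoints : rationalPoints.Countable :=
  (countable_range _).preimage Subtype.val_injective

theorem X6.exists_rationalPoint_between {x y : X6} (hxy : le6 x y) (hyx : ¬ le6 y x) :
    ∃ d ∈ rationalPoints, le6 x d ∧ le6 d y := by
  rcases hxy with rfl | ⟨hx, hy, hxy⟩ | ⟨hx, hy, hxy⟩
  · exact absurd (Or.inl rfl) hyx
  · have hlt : x.1 < y.1 := lt_of_not_ge fun h => hyx (Or.inr (Or.inl ⟨hy, hx, h⟩))
    obtain ⟨q, hxq, hqy⟩ := exists_rat_btwn hlt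
    have hq : (q : ℝ) ∈ Icc (0 : ℝ) 1 := ⟨hx.1.trans hxq.le, hqy.le.trans hy.2⟩
    exact ⟨⟨q, Or.inl hq⟩, ⟨q, rfl⟩, Or.inr (Or.inl ⟨hx, hq, hxq.le⟩),
      Or.inr (Or.inl ⟨hq, hy, hqy.le⟩)⟩
  · obtain ⟨q, hxq, hqy⟩ := exists_rat_btwn hxy
    have hq : (q : ℝ) ∈ Icc (0 : ℝ) 1 := ⟨by linarith [hx.1], hqy.le.trans hy.2⟩
    exact ⟨⟨q, Or.inl hq⟩, ⟨q, rfl⟩, Or.inr (Or.inr ⟨hx, hq, hxq⟩),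
      Or.inr (Or.inl ⟨hq, hy, hqy.le⟩)⟩

def X6.lower (t : Icc (0 : ℝ) 1) : X6 := ⟨t, Or.inl t.2⟩

theorem add_two_mem_Icc_two_three {t : ℝ} (ht : t ∈ Icc (0 : ℝ) 1) : t + 2 ∈ Icc (2 : ℝ) 3 :=
  ⟨by linarith [ht.1], by linarith [ht.2]⟩

def X6.upper (t : Icc (0 : ℝ) 1) : X6 := ⟨t + 2, Or.inr (add_two_mem_Icc_two_three t.2)⟩

theorem X6.not_le6_upper_lower (t : Icc (0 : ℝ) 1) : ¬ le6 (upper t) (lower t) := by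
  rintro (h | ⟨⟨_, h⟩, _, _⟩ | ⟨_, _, h⟩)
  · have : (t : ℝ) + 2 = t := congrArg Subtype.val h
    linarith
  · change (t : ℝ) + 2 ≤ 1 at h
    linarith [t.2.1]
  · change (t : ℝ) + 2 - 2 < t at h
    linarith

theorem X6.le6_upper_lower_of_lt {t s : Icc (0 : ℝ) 1} (hts : t < s) :
    le6 (upper t) (lower s) :=
  Or.inr (Or.inr ⟨add_two_mem_Icc_two_three t.2, s.2,
    show (t : ℝ) + 2 - 2 < s by simpa using hts⟩)

/-- `(X6, le6)` is a Debreu separable preorder with no countable multi-utility. -/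
theorem debreu_separable_without_countable_multiutility :
    (∀ x, le6 x x) ∧ (∀ x y z, le6 x y → le6 y z → le6 x z) ∧
    (∃ D : Set X6, D.Countable ∧
      ∀ x y, le6 x y → ¬ le6 y x → ∃ d ∈ D, le6 x d ∧ le6 d y) ∧
    ¬ ∃ u : ℕ → X6 → ℝ, ∀ x y, le6 x y ↔ ∀ n, u n x ≤ u n y := by
  refine ⟨fun _ => Or.inl rfl, fun _ _ _ => le6_trans,
    ⟨_, X6.countable_rationalPoints, fun _ _ => X6.exists_rationalPoint_between⟩, ?_⟩
  rintro ⟨u, hu⟩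
  have hcount : Countable (Icc (0 : ℝ) 1) :=
    IsMultiUtility.countable_of_staircase (r := le6) hu X6.not_le6_upper_lower
      fun _ _ => X6.le6_upper_lower_of_lt
  exact Real.not_countable_Icc one_pos (countable_coe_iff.1 hcount)
end

section
/- If (X,≼) is a preorder possessing a countable Debreu upper dense subset, then it has a strict monotone if and only if it has a countable multi-utility. -/
/-! A countable multi-utility `u` embeds `X` order-faithfully into `ℕ → ℝ` with the product order,
and `v ↦ ∑ 2⁻ⁿ arctan (v n)` is strictly monotone there; composing gives a strict monotone.
Conversely, if `f` is a strict monotone, then `f` together with the indicators of the upper sets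
`{z | d ≼ z}`, `d ∈ D`, is a countable multi-utility: a pair with `¬ x ≼ y` is separated by `f`
when `y ≺ x` and by the indicator of some `d` given by Debreu upper density when `x ⋈ y`. -/

open Real

lemma summable_half_pow_mul_arctan (v : ℕ → ℝ) :
    Summable fun n => (1 / 2 : ℝ) ^ n * arctan (v n) := by
  refine Summable.of_norm_bounded (summable_geometric_two.mul_right (π / 2)) fun n => ?_
  rw [norm_mul, norm_pow, Real.norm_of_nonneg (by norm_num : (0 : ℝ) ≤ 1 / 2), Real.norm_eq_abs]
  gcongr
  exact (abs_lt.mpr ⟨neg_pi_div_two_lt_arctan _, arctan_lt_pi_div_two _⟩).le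

lemma strictMono_tsum_half_pow_mul_arctan :
    StrictMono fun v : ℕ → ℝ => ∑' n, (1 / 2 : ℝ) ^ n * arctan (v n) := by
  intro v w hvw
  obtain ⟨hle, m, hm⟩ := Pi.lt_def.mp hvw
  refine Summable.tsum_lt_tsum (i := m) (fun n => ?_) ?_
    (summable_half_pow_mul_arctan v) (summable_half_pow_mul_arctan w)
  · exact mul_le_mul_of_nonneg_left (arctan_mono (hle n)) (by positivity)
  · exact mul_lt_mul_of_pos_left (arctan_strictMono hm) (by positivity)

section Debreu

variable {X : Type*} (le : X → X → Prop)

open Classical in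
noncomputable def debreuMultiutility (D : Set X) (f : X → ℝ) : Option D → X → ℝ
  | none => f
  | some d => fun x => if le d x then 1 else 0

variable {le}

lemma le_iff_forall_debreuMultiutility_le (htrans : ∀ x y z, le x y → le y z → le x z)
    {D : Set X} (hDense : ∀ x y, ¬ le x y → ¬ le y x → ∃ d ∈ D, (¬ le x d ∧ ¬ le d x) ∧ le d y)
    {f : X → ℝ} (hmono : ∀ x y, le x y → f x ≤ f y)
    (hstrict : ∀ x y, le x y → ¬ le y x → f x < f y) (x y : X) :
    le x y ↔ ∀ i, debreuMultiutility le D f i x ≤ debreuMultiutility le D f i y := by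
  constructor
  · rintro hxy (_ | d)
    · exact hmono x y hxy
    · by_cases hdx : le d x
      · simp [debreuMultiutility, hdx, htrans _ _ _ hdx hxy]
      · simp only [debreuMultiutility, if_neg hdx]
        split_ifs <;> norm_num
  · intro h
    by_contra hxy
    by_cases hyx : le y x
    · exact (h none).not_gt (hstrict y x hyx hxy)
    · obtain ⟨d, hdD, ⟨-, hdy⟩, hdx⟩ := hDense y x hyx hxy
      have := h (some ⟨d, hdD⟩)
      norm_num [debreuMultiutility, hdx, hdy] at this

lemma exists_nat_multiutility_of_strict_monotone (htrans : ∀ x y z, le x y → le y z → le x z)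
    {D : Set X} (hD : D.Countable)
    (hDense : ∀ x y, ¬ le x y → ¬ le y x → ∃ d ∈ D, (¬ le x d ∧ ¬ le d x) ∧ le d y)
    {f : X → ℝ} (hmono : ∀ x y, le x y → f x ≤ f y)
    (hstrict : ∀ x y, le x y → ¬ le y x → f x < f y) :
    ∃ u : ℕ → X → ℝ, ∀ x y, le x y ↔ ∀ n, u n x ≤ u n y := by
  have := hD.to_subtype
  obtain ⟨e, he⟩ := exists_surjective_nat (Option D)
  exact ⟨fun n => debreuMultiutility le D f (e n), fun x y =>
    (le_iff_forall_debreuMultiutility_le htrans hDense hmono hstrict x y).trans he.forall⟩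

end Debreu

theorem strict_monotone_iff_countable_multiutility_general {X : Type*} (le : X → X → Prop)
    (htrans : ∀ x y z, le x y → le y z → le x z)
    (D : Set X) (hD : D.Countable)
    (hDebreuUpperDense : ∀ x y, ¬ le x y → ¬ le y x →
      ∃ d ∈ D, (¬ le x d ∧ ¬ le d x) ∧ le d y) :
    (∃ f : X → ℝ, (∀ x y, le x y → f x ≤ f y) ∧
        (∀ x y, le x y → ¬ le y x → f x < f y)) ↔
      (∃ u : ℕ → X → ℝ, ∀ x y, le x y ↔ ∀ n, u n x ≤ u n y) := by
  constructor
  · rintro ⟨f, hmono, hstrict⟩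
    exact exists_nat_multiutility_of_strict_monotone htrans hD hDebreuUpperDense hmono hstrict
  · rintro ⟨u, hu⟩
    have hΦ := strictMono_tsum_half_pow_mul_arctan
    refine ⟨fun x => ∑' n, (1 / 2 : ℝ) ^ n * arctan (u n x),
      fun x y hxy => hΦ.monotone ((hu x y).mp hxy), fun x y hxy hyx => hΦ ?_⟩
    exact lt_of_le_not_ge ((hu x y).mp hxy) (mt (hu y x).mpr hyx)

/-- With a countable Debreu upper dense subset, a strict monotone exists iff a
countable multi-utility does. -/
theorem strict_monotone_iff_countable_multiutility {X : Type*} (le : X → X → Prop)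
    (hrefl : ∀ x, le x x) (htrans : ∀ x y z, le x y → le y z → le x z)
    (D : Set X) (hD : D.Countable)
    (hDebreuUpperDense : ∀ x y, ¬ le x y → ¬ le y x →
      ∃ d ∈ D, (¬ le x d ∧ ¬ le d x) ∧ le d y) :
    (∃ f : X → ℝ, (∀ x y, le x y → f x ≤ f y) ∧
        (∀ x y, le x y → ¬ le y x → f x < f y)) ↔
      (∃ u : ℕ → X → ℝ, ∀ x y, le x y ↔ ∀ n, u n x ≤ u n y) :=
  strict_monotone_iff_countable_multiutility_general le htrans D hD hDebreuUpperDense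
end

section
/- If a partial order (X,≼) has a finite multi-utility consisting of N functions, then it has a realizer consisting of N linear extensions, i.e., N total order extensions (≼_1,...,≼_N) with x ≼ y iff x ≼_i y for all i. -/
/-!
Extend `≼` to a linear order `⊑` (Szpilrajn). For each utility `uᵢ`, order `X` lexicographically:
first by `uᵢ`, ties broken by `⊑`. Each of these orders is a linear extension of `≼`, and `x`
precedes `y` in all of them iff `uᵢ x ≤ uᵢ y` for every `i`, that is, iff `x ≼ y`.
-/

section LexRefinement

variable {X α : Type*}

def lexRefinement [LT α] (f : X → α) (s : X → X → Prop) : X → X → Prop :=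
  (fun x ↦ (f x, x)) ⁻¹'o Prod.Lex (· < ·) s

theorem isLinearOrder_lexRefinement [LinearOrder α] (f : X → α) (s : X → X → Prop)
    [IsLinearOrder X s] : IsLinearOrder X (lexRefinement f s) :=
  have : IsLinearOrder (α × X) (Prod.Lex (· < ·) s) := {}
  (RelEmbedding.preimage ⟨_, fun _ _ h ↦ congrArg Prod.snd h⟩ _).isLinearOrder

theorem le_of_lexRefinement [Preorder α] {f : X → α} {s : X → X → Prop} {x y : X}
    (h : lexRefinement f s x y) : f x ≤ f y := by
  rcases Prod.lex_def.1 h with hlt | ⟨heq, -⟩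
  exacts [hlt.le, heq.le]

theorem lexRefinement_of_le_of_rel [PartialOrder α] {f : X → α} {s : X → X → Prop} {x y : X}
    (hf : f x ≤ f y) (hs : s x y) : lexRefinement f s x y :=
  Prod.lex_def.2 (hf.lt_or_eq.imp_right (⟨·, hs⟩))

end LexRefinement

theorem isPreorder_of_iff_forall_le {X ι α : Type*} [Preorder α] (r : X → X → Prop)
    (u : ι → X → α) (hu : ∀ x y, r x y ↔ ∀ i, u i x ≤ u i y) : IsPreorder X r where
  refl x := (hu x x).2 fun _ ↦ le_rfl
  trans x y z hxy hyz := (hu x z).2 fun i ↦ ((hu x y).1 hxy i).trans ((hu y z).1 hyz i)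

theorem finite_multiutility_gives_finite_realizer_general {X : Type*} (le : X → X → Prop)
    (hanti : ∀ x y, le x y → le y x → x = y)
    (N : ℕ) (u : Fin N → X → ℝ) (hu : ∀ x y, le x y ↔ ∀ i, u i x ≤ u i y) :
    ∃ R : Fin N → X → X → Prop,
      (∀ i, (∀ x, R i x x) ∧
        (∀ x y z, R i x y → R i y z → R i x z) ∧
        (∀ x y, R i x y → R i y x → x = y) ∧
        (∀ x y, R i x y ∨ R i y x) ∧
        (∀ x y, le x y → R i x y)) ∧
      (∀ x y, le x y ↔ ∀ i, R i x y) := by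
  have : IsPartialOrder X le := { isPreorder_of_iff_forall_le le u hu with antisymm := hanti }
  obtain ⟨s, hs, hle_s⟩ := extend_partialOrder le
  have extends_le (i : Fin N) {x y : X} (hxy : le x y) : lexRefinement (u i) s x y :=
    lexRefinement_of_le_of_rel ((hu x y).1 hxy i) (hle_s x y hxy)
  refine ⟨fun i ↦ lexRefinement (u i) s, fun i ↦ ?_, fun x y ↦ ?_⟩
  · have := isLinearOrder_lexRefinement (u i) s
    exact ⟨refl_of _, fun _ _ _ ↦ trans_of _, fun _ _ ↦ antisymm_of _, total_of _,
      fun _ _ ↦ extends_le i⟩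
  · exact ⟨fun hxy i ↦ extends_le i hxy, fun h ↦ (hu x y).2 fun i ↦ le_of_lexRefinement (h i)⟩

/-- A partial order with a multi-utility of `N` functions has a realizer
consisting of `N` linear extensions. -/
theorem finite_multiutility_gives_finite_realizer {X : Type*} (le : X → X → Prop)
    (hrefl : ∀ x, le x x) (htrans : ∀ x y z, le x y → le y z → le x z)
    (hanti : ∀ x y, le x y → le y x → x = y)
    (N : ℕ) (u : Fin N → X → ℝ) (hu : ∀ x y, le x y ↔ ∀ i, u i x ≤ u i y) :
    ∃ R : Fin N → X → X → Prop,
      (∀ i, (∀ x, R i x x) ∧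
        (∀ x y z, R i x y → R i y z → R i x z) ∧
        (∀ x y, R i x y → R i y x → x = y) ∧
        (∀ x y, R i x y ∨ R i y x) ∧
        (∀ x y, le x y → R i x y)) ∧
      (∀ x y, le x y ↔ ∀ i, R i x y) :=
  finite_multiutility_gives_finite_realizer_general le hanti N u hu
end

section
/- Let X = ℝ∖{0} with x ≼ y iff |x| ≤ |y| and sgn(x) ≤ sgn(y). Then (X,≼) is a partial order admitting a multi-utility of two functions, but any family (f_i)_{i∈I} of functions satisfying: f_i(x) = f_i(y) when x ~ y, f_i(x) < f_i(y) for all i when x ≺ y, and for incomparable x,y some f_i increases and some f_j decreases, must be infinite. -/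
/-- The ground set `ℝ \ {0}`. -/
def X10 : Type := {x : ℝ // x ≠ 0}

/-- `x ≼ y` iff `|x| ≤ |y|` and `sgn x ≤ sgn y`. -/
def le10 (x y : X10) : Prop := |x.1| ≤ |y.1| ∧ Real.sign x.1 ≤ Real.sign y.1

/-!
For each `a > 0` the points `b ∈ (0, a)` are incomparable to `-a`, so some member of a strict
monotone multi-utility must put `b` below `-a`. If the family is finite, one member `f` does so for
all `b < a` at once (take `b` above the finitely many exceptions), so `f` jumps at `a`: `f (-a)`
lies above all `f b` with `b < a` but below `f a`. A rational in `(f (-a), f a)` together with the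
index of `f` then codes `a` injectively, which is impossible for uncountably many `a`.
-/

open Set

theorem Real.sign_mul_abs (r : ℝ) : Real.sign r * |r| = r := by
  rcases lt_trichotomy r 0 with hr | rfl | hr
  · rw [Real.sign_of_neg hr, abs_of_neg hr]; ring
  · simp
  · rw [Real.sign_of_pos hr, abs_of_pos hr, one_mul]

section Jumps

variable {α ι : Type*} [LinearOrder α] {g h : ι → α → ℝ}

theorem exists_index_forall_lt_of_finite [NoMinOrder α] [Finite ι]
    (hg : ∀ i, Monotone (g i)) (hgh : ∀ a b, b < a → ∃ i, g i b < h i a) (a : α) :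
    ∃ k, ∀ b < a, g k b < h k a := by
  by_contra! hnot
  choose c hca hc using hnot
  obtain ⟨b₀, hb₀⟩ := exists_lt a
  have : Nonempty (Iio a) := ⟨⟨b₀, hb₀⟩⟩
  obtain ⟨⟨b, hb⟩, hcb⟩ := Finite.exists_le fun i => (⟨c i, hca i⟩ : Iio a)
  obtain ⟨i, hi⟩ := hgh a b hb
  exact (hc i).not_gt (hi.trans_le' (hg i (hcb i)))

theorem countable_of_forall_exists_jump [Countable ι]
    (hjump : ∀ a, ∃ k, (∀ b < a, g k b < h k a) ∧ h k a < g k a) : Countable α := by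
  have hcode : ∀ a, ∃ p : ι × ℚ, (∀ b < a, g p.1 b < h p.1 a) ∧ h p.1 a < p.2 ∧ p.2 < g p.1 a :=
    fun a => by
      obtain ⟨k, hk, hlt⟩ := hjump a
      obtain ⟨q, hq⟩ := exists_rat_btwn hlt
      exact ⟨(k, q), hk, hq⟩
  choose p hp using hcode
  refine (Function.Injective.of_lt_imp_ne (f := p) fun a a' haa' heq => ?_).countable
  have : ((p a).2 : ℝ) < (p a).2 :=
    calc ((p a).2 : ℝ) < g (p a).1 a := (hp a).2.2
      _ = g (p a').1 a := by rw [heq]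
      _ < h (p a').1 a' := (hp a').1 a haa'
      _ < (p a').2 := (hp a').2.1
      _ = (p a).2 := by rw [heq]
  exact lt_irrefl _ this

end Jumps

namespace X10

def pos (a : Ioi (0 : ℝ)) : X10 := ⟨a, a.2.ne'⟩

def neg (a : Ioi (0 : ℝ)) : X10 := ⟨-a, neg_ne_zero.mpr a.2.ne'⟩

variable (a : Ioi (0 : ℝ))

@[simp] theorem abs_pos : |(pos a).1| = a := abs_of_pos a.2
@[simp] theorem abs_neg : |(neg a).1| = a := (_root_.abs_neg _).trans (abs_pos a)
@[simp] theorem sign_pos : Real.sign (pos a).1 = 1 := Real.sign_of_pos a.2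
@[simp] theorem sign_neg : Real.sign (neg a).1 = -1 := Real.sign_of_neg (neg_lt_zero.mpr a.2)

theorem pos_lt_pos {a b} (hab : a < b) : le10 (pos a) (pos b) ∧ ¬ le10 (pos b) (pos a) := by
  simp only [le10, abs_pos, sign_pos, le_refl, and_true, not_le, Subtype.coe_lt_coe]
  exact ⟨hab.le, hab⟩

theorem neg_lt_pos : le10 (neg a) (pos a) ∧ ¬ le10 (pos a) (neg a) := by
  simp only [le10, abs_neg, abs_pos, sign_neg, sign_pos]
  norm_num

theorem not_le_neg_pos {a b} (hba : b < a) : ¬ le10 (neg a) (pos b) ∧ ¬ le10 (pos b) (neg a) := by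
  simp only [le10, abs_neg, abs_pos, sign_neg, sign_pos, not_and, not_le]
  exact ⟨fun h => absurd h (not_le.mpr hba), by norm_num⟩

end X10

theorem le10_antisymm (x y : X10) (hxy : le10 x y) (hyx : le10 y x) : x = y :=
  Subtype.ext <| by
    rw [← Real.sign_mul_abs x.1, ← Real.sign_mul_abs y.1, le_antisymm hxy.1 hyx.1,
      le_antisymm hxy.2 hyx.2]

/-- `(ℝ \ {0}, ≼)` is a partial order with a two-function multi-utility, but any
family of strict monotones forming a strict monotone multi-utility must be infinite. -/
theorem two_multiutility_but_no_finite_strict_monotone_multiutility :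
    (∀ x, le10 x x) ∧ (∀ x y z, le10 x y → le10 y z → le10 x z) ∧
    (∀ x y, le10 x y → le10 y x → x = y) ∧
    (∃ u₁ u₂ : X10 → ℝ, ∀ x y, le10 x y ↔ u₁ x ≤ u₁ y ∧ u₂ x ≤ u₂ y) ∧
    (∀ (ι : Type) (f : ι → X10 → ℝ),
      (∀ i x y, le10 x y → le10 y x → f i x = f i y) →
      (∀ i x y, le10 x y → ¬ le10 y x → f i x < f i y) →
      (∀ x y, ¬ le10 x y → ¬ le10 y x →
        (∃ i, f i y < f i x) ∧ (∃ j, f j x < f j y)) →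
      Infinite ι) := by
  refine ⟨fun x => ⟨le_rfl, le_rfl⟩, fun x y z hxy hyz => ⟨hxy.1.trans hyz.1, hxy.2.trans hyz.2⟩,
    le10_antisymm, ⟨fun x => |x.1|, fun x => Real.sign x.1, fun x y => Iff.rfl⟩, ?_⟩
  intro ι f _ hlt hincomp
  by_contra hfin
  have : Finite ι := not_infinite_iff_finite.mp hfin
  have hmono : ∀ i, Monotone fun a => f i (X10.pos a) := fun i =>
    StrictMono.monotone fun a b hab => hlt i _ _ (X10.pos_lt_pos hab).1 (X10.pos_lt_pos hab).2
  have hjump := exists_index_forall_lt_of_finite (h := fun i a => f i (X10.neg a)) hmono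
    fun a b hba => (hincomp _ _ (X10.not_le_neg_pos hba).1 (X10.not_le_neg_pos hba).2).1
  have : Countable (Ioi (0 : ℝ)) := countable_of_forall_exists_jump fun a =>
    (hjump a).imp fun k hk => ⟨hk, hlt k _ _ (X10.neg_lt_pos a).1 (X10.neg_lt_pos a).2⟩
  exact Cardinal.aleph0_lt_continuum.not_ge (Cardinal.mk_Ioi_real 0 ▸ Cardinal.mk_le_aleph0)
end

section
/- For |Ω| ≥ 3, there exist probability distributions p, q over Ω that are incomparable under the majorization (uncertainty) preorder; concretely p = (2/3, 1/6, 1/6, 0, …, 0) and q = (1/2, 1/2, 0, …, 0) satisfy neither p ≼_U q nor q ≼_U p, yet H(p) ≠ H(q) so Shannon entropy compares them. -/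
open Real

/-- The sum of the `i` largest components of `p`. -/
noncomputable def topSum {n : ℕ} (p : Fin n → ℝ) (i : ℕ) : ℝ :=
  sSup {t | ∃ s : Finset (Fin n), s.card = i ∧ ∑ j ∈ s, p j = t}

/-- The uncertainty preorder: `p ≼_U q` iff `u_i(p) ≤ u_i(q)` for `1 ≤ i ≤ n - 1`, where
`u_i(p)` is minus the sum of the `i` largest components of `p`. -/
noncomputable def precUncert {n : ℕ} (p q : Fin n → ℝ) : Prop :=
  ∀ i, 1 ≤ i → i ≤ n - 1 → -(topSum p i) ≤ -(topSum q i)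

lemma aux_log : Real.log 3 - (1/3) * Real.log 2 ≠ Real.log 2 := by
  intro h
  have h3 : (3:ℝ) * Real.log 3 = 4 * Real.log 2 := by linarith
  have h27 : Real.log 27 = (3:ℕ) * Real.log 3 := by
    rw [show (27:ℝ) = 3 ^ (3:ℕ) by norm_num, Real.log_pow]
  have h16 : Real.log 16 = (4:ℕ) * Real.log 2 := by
    rw [show (16:ℝ) = 2 ^ (4:ℕ) by norm_num, Real.log_pow]
  have hlt : Real.log 16 < Real.log 27 :=
    Real.log_lt_log (by norm_num) (by norm_num)
  rw [h16, h27] at hlt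
  push_cast at hlt
  linarith

/-- For `|Ω| ≥ 3`, `p = (2/3,1/6,1/6,0,…,0)` and `q = (1/2,1/2,0,…,0)` are
incomparable in the uncertainty preorder, yet have different Shannon entropies. -/
theorem incomparable_distributions_with_distinct_entropy (n : ℕ) (hn : 3 ≤ n)
    (p q : Fin n → ℝ)
    (hp : p = fun j => if j.val = 0 then 2/3 else if j.val = 1 then 1/6
      else if j.val = 2 then 1/6 else 0)
    (hq : q = fun j => if j.val = 0 then 1/2 else if j.val = 1 then 1/2 else 0) :
    ¬ precUncert p q ∧ ¬ precUncert q p ∧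
      (∑ j, negMulLog (p j)) ≠ ∑ j, negMulLog (q j) := by
  have h0 : (0:ℕ) < n := by omega
  have h1 : (1:ℕ) < n := by omega
  have h2 : (2:ℕ) < n := by omega
  set i0 : Fin n := ⟨0, h0⟩ with hi0
  set i1 : Fin n := ⟨1, h1⟩ with hi1
  set i2 : Fin n := ⟨2, h2⟩ with hi2
  have hne01 : i0 ≠ i1 := by simp [hi0, hi1, Fin.ext_iff]
  have hne02 : i0 ≠ i2 := by simp [hi0, hi2, Fin.ext_iff]
  have hne12 : i1 ≠ i2 := by simp [hi1, hi2, Fin.ext_iff]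
  -- pointwise bounds
  have hpb : ∀ j, p j ≤ 1/6 + (if j = i0 then (1/2:ℝ) else 0) := by
    intro j
    subst hp
    by_cases h : j = i0
    · simp [h, hi0]; norm_num
    · have : j.val ≠ 0 := by
        intro hv; exact h (Fin.ext hv)
      simp only [this, if_false, if_neg h]
      split <;> norm_num; split <;> norm_num
  have hqb : ∀ j, q j ≤ 1/2 := by
    intro j; subst hq; dsimp only
    split <;> norm_num; split <;> norm_num
  -- upper bound on topSum p 2
  have hps2 : ∀ s : Finset (Fin n), s.card = 2 → ∑ j ∈ s, p j ≤ 5/6 := by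
    intro s hs
    calc ∑ j ∈ s, p j ≤ ∑ j ∈ s, (1/6 + (if j = i0 then (1/2:ℝ) else 0)) :=
          Finset.sum_le_sum (fun j _ => hpb j)
      _ = s.card * (1/6) + ∑ j ∈ s, (if j = i0 then (1/2:ℝ) else 0) := by
          rw [Finset.sum_add_distrib, Finset.sum_const]; ring_nf
      _ ≤ 2 * (1/6) + (1/2) := by
          rw [hs]
          gcongr
          · norm_num
          rw [Finset.sum_ite_eq' s i0 (fun _ => (1/2:ℝ))]
          split <;> norm_num
      _ = 5/6 := by norm_num
  -- upper bound on topSum q 1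
  have hqs1 : ∀ s : Finset (Fin n), s.card = 1 → ∑ j ∈ s, q j ≤ 1/2 := by
    intro s hs
    calc ∑ j ∈ s, q j ≤ ∑ j ∈ s, (1/2:ℝ) := Finset.sum_le_sum (fun j _ => hqb j)
      _ = 1/2 := by rw [Finset.sum_const, hs]; norm_num
  -- generic card-k bound for q (for bddAbove)
  have hqs2 : ∀ s : Finset (Fin n), s.card = 2 → ∑ j ∈ s, q j ≤ 1 := by
    intro s hs
    calc ∑ j ∈ s, q j ≤ ∑ j ∈ s, (1/2:ℝ) := Finset.sum_le_sum (fun j _ => hqb j)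
      _ = 1 := by rw [Finset.sum_const, hs]; norm_num
  have hpb1 : ∀ j, p j ≤ 2/3 := by
    intro j; subst hp; dsimp only
    split <;> norm_num; split <;> norm_num; split <;> norm_num
  have hps1 : ∀ s : Finset (Fin n), s.card = 1 → ∑ j ∈ s, p j ≤ 2/3 := by
    intro s hs
    calc ∑ j ∈ s, p j ≤ ∑ j ∈ s, (2/3:ℝ) := Finset.sum_le_sum (fun j _ => hpb1 j)
      _ = 2/3 := by rw [Finset.sum_const, hs]; norm_num
  -- key topSum facts
  have htp2 : topSum p 2 ≤ 5/6 := by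
    apply Real.sSup_le
    · rintro t ⟨s, hs, rfl⟩; exact hps2 s hs
    · norm_num
  have htq1 : topSum q 1 ≤ 1/2 := by
    apply Real.sSup_le
    · rintro t ⟨s, hs, rfl⟩; exact hqs1 s hs
    · norm_num
  have htq2 : (1:ℝ) ≤ topSum q 2 := by
    apply le_csSup
    · exact ⟨1, by rintro t ⟨s, hs, rfl⟩; exact hqs2 s hs⟩
    · refine ⟨{i0, i1}, ?_, ?_⟩
      · rw [Finset.card_insert_of_notMem (by simp [hne01]), Finset.card_singleton]
      · rw [Finset.sum_insert (by simp [hne01]), Finset.sum_singleton]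
        subst hq; simp [hi0, hi1]; norm_num
  have htp1 : (2/3:ℝ) ≤ topSum p 1 := by
    apply le_csSup
    · exact ⟨2/3, by rintro t ⟨s, hs, rfl⟩; exact hps1 s hs⟩
    · refine ⟨{i0}, Finset.card_singleton _, ?_⟩
      rw [Finset.sum_singleton]; subst hp; simp [hi0]
  refine ⟨?_, ?_, ?_⟩
  · intro h
    have := h 2 (by norm_num) (by omega)
    have : topSum q 2 ≤ topSum p 2 := by linarith
    linarith
  · intro h
    have := h 1 (by norm_num) (by omega)
    have : topSum p 1 ≤ topSum q 1 := by linarith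
    linarith
  · -- entropies differ
    have hp0 : ∀ j, j ∉ ({i0, i1, i2} : Finset (Fin n)) → negMulLog (p j) = 0 := by
      intro j hj
      simp only [Finset.mem_insert, Finset.mem_singleton, not_or] at hj
      obtain ⟨h0', h1', h2'⟩ := hj
      have : p j = 0 := by
        subst hp; dsimp only
        rw [if_neg, if_neg, if_neg]
        · intro hv; exact h2' (Fin.ext hv)
        · intro hv; exact h1' (Fin.ext hv)
        · intro hv; exact h0' (Fin.ext hv)
      rw [this, negMulLog_zero]
    have hq0 : ∀ j, j ∉ ({i0, i1} : Finset (Fin n)) → negMulLog (q j) = 0 := by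
      intro j hj
      simp only [Finset.mem_insert, Finset.mem_singleton, not_or] at hj
      obtain ⟨h0', h1'⟩ := hj
      have : q j = 0 := by
        subst hq; dsimp only
        rw [if_neg, if_neg]
        · intro hv; exact h1' (Fin.ext hv)
        · intro hv; exact h0' (Fin.ext hv)
      rw [this, negMulLog_zero]
    have hsp : ∑ j, negMulLog (p j) = negMulLog (2/3) + 2 * negMulLog (1/6) := by
      rw [← Finset.sum_subset (Finset.subset_univ ({i0, i1, i2} : Finset (Fin n)))
        (fun j _ hj => hp0 j hj)]
      rw [Finset.sum_insert (by simp [hne01, hne02]),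
        Finset.sum_insert (by simp [hne12]), Finset.sum_singleton]
      have e0 : p i0 = 2/3 := by subst hp; simp [hi0]
      have e1 : p i1 = 1/6 := by subst hp; simp [hi1]
      have e2 : p i2 = 1/6 := by subst hp; simp [hi2]
      rw [e0, e1, e2]; ring
    have hsq : ∑ j, negMulLog (q j) = 2 * negMulLog (1/2) := by
      rw [← Finset.sum_subset (Finset.subset_univ ({i0, i1} : Finset (Fin n)))
        (fun j _ hj => hq0 j hj)]
      rw [Finset.sum_insert (by simp [hne01]), Finset.sum_singleton]
      have e0 : q i0 = 1/2 := by subst hq; simp [hi0]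
      have e1 : q i1 = 1/2 := by subst hq; simp [hi1]
      rw [e0, e1]; ring
    rw [hsp, hsq]
    have l23 : Real.log (2/3) = Real.log 2 - Real.log 3 := by
      rw [Real.log_div (by norm_num) (by norm_num)]
    have l16 : Real.log (1/6) = -(Real.log 2 + Real.log 3) := by
      rw [show (1/6:ℝ) = (2*3)⁻¹ by norm_num, Real.log_inv,
        Real.log_mul (by norm_num) (by norm_num)]
    have l12 : Real.log (1/2) = -Real.log 2 := by
      rw [one_div, Real.log_inv]
    simp only [negMulLog, l23, l16, l12]
    intro h
    apply aux_log
    ring_nf at h ⊢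
    linarith
end

section
/- For any linear constraint set B = {p ∈ 𝕡_Ω : 𝔼_p[E] = c} with |Ω| ≥ 3 and suitable E, c, the set of maximal elements of the uncertainty (reverse majorization) preorder restricted to B can be uncountable; concretely, for |Ω| = 3, E(x₁)=1, E(x₂)=−1, E(x₃)=0, c=1/4, the distributions p_λ = (1/8)(5−λ, 3−λ, 2λ) for λ ∈ [1, 5/3] are all maximal in B with respect to ≼_U. -/
open Real

/-- The sum of the `i` largest components of `p`. -/
noncomputable def topSum3 (p : Fin 3 → ℝ) (i : ℕ) : ℝ :=
  sSup {t | ∃ s : Finset (Fin 3), s.card = i ∧ ∑ j ∈ s, p j = t}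

/-- The uncertainty preorder on distributions over three outcomes: partial sums of the
decreasing rearrangement of `q` are below those of `p` for `i = 1, 2`. -/
noncomputable def precU3 (p q : Fin 3 → ℝ) : Prop :=
  ∀ i, 1 ≤ i → i ≤ 2 → topSum3 q i ≤ topSum3 p i

/-- The energy function `E(x₁) = 1, E(x₂) = -1, E(x₃) = 0`. -/
noncomputable def E13 : Fin 3 → ℝ := ![1, -1, 0]

/-- The linearly constrained set `B = {p ∈ 𝕡_Ω | 𝔼_p[E] = 1/4}`. -/
noncomputable def B13 : Set (Fin 3 → ℝ) :=
  {p | (∀ i, 0 ≤ p i) ∧ (∑ i, p i) = 1 ∧ (∑ i, p i * E13 i) = 1/4}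

/-! The constraint set is the segment `q = (t + 1/4, t, 3/4 - 2t)`, so a point of it is determined
by `q 1`. For `1 ≤ λ ≤ 5/3` the largest entry of `p_λ` is `p_λ 0` and the smallest is `p_λ 1`;
the two majorization inequalities `q 0 ≤ p_λ 0` and `q 0 + q 2 ≤ p_λ 0 + p_λ 2` then read
`q 1 ≤ p_λ 1` and `q 1 ≥ p_λ 1`, so any `q ∈ B` above `p_λ` is `p_λ` itself. -/

lemma topSum3_one (p : Fin 3 → ℝ) :
    topSum3 p 1 = max (p 0) (max (p 1) (p 2)) := by
  refine IsGreatest.csSup_eq ⟨?_, ?_⟩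
  · have h : ∀ i, p i ∈ {t | ∃ s : Finset (Fin 3), s.card = 1 ∧ ∑ j ∈ s, p j = t} :=
      fun i ↦ ⟨{i}, rfl, Finset.sum_singleton _ _⟩
    exact max_rec' _ (h 0) (max_rec' _ (h 1) (h 2))
  · rintro t ⟨s, hs, rfl⟩
    obtain ⟨a, rfl⟩ := Finset.card_eq_one.mp hs
    fin_cases a <;> simp

lemma topSum3_two (p : Fin 3 → ℝ) :
    topSum3 p 2 = max (p 0 + p 1) (max (p 0 + p 2) (p 1 + p 2)) := by
  refine IsGreatest.csSup_eq ⟨?_, ?_⟩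
  · have h : ∀ i j, i ≠ j →
        p i + p j ∈ {t | ∃ s : Finset (Fin 3), s.card = 2 ∧ ∑ j ∈ s, p j = t} :=
      fun i j hij ↦ ⟨{i, j}, Finset.card_pair hij, Finset.sum_pair hij⟩
    exact max_rec' _ (h 0 1 (by decide)) (max_rec' _ (h 0 2 (by decide)) (h 1 2 (by decide)))
  · rintro t ⟨s, hs, rfl⟩
    obtain ⟨a, b, hab, rfl⟩ := Finset.card_eq_two.mp hs
    rw [Finset.sum_pair hab]
    fin_cases a <;> fin_cases b <;> grind

lemma precU3_refl (p : Fin 3 → ℝ) : precU3 p p :=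
  fun _ _ _ ↦ le_rfl

lemma sum_mul_E13 (p : Fin 3 → ℝ) : ∑ i, p i * E13 i = p 0 - p 1 := by
  simp [Fin.sum_univ_three, E13, sub_eq_add_neg]

lemma apply_zero_of_mem_B13 {q : Fin 3 → ℝ} (hq : q ∈ B13) : q 0 = q 1 + 1 / 4 := by
  have hE := hq.2.2
  rw [sum_mul_E13] at hE
  linarith

lemma apply_two_of_mem_B13 {q : Fin 3 → ℝ} (hq : q ∈ B13) : q 2 = 3 / 4 - 2 * q 1 := by
  have h0 := apply_zero_of_mem_B13 hq
  obtain ⟨-, hsum, -⟩ := hq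
  rw [Fin.sum_univ_three] at hsum
  linarith

lemma eq_of_mem_B13_of_apply_one_eq {p q : Fin 3 → ℝ} (hp : p ∈ B13) (hq : q ∈ B13)
    (h : p 1 = q 1) : p = q := by
  funext j
  fin_cases j
  · simp [apply_zero_of_mem_B13 hp, apply_zero_of_mem_B13 hq, h]
  · exact h
  · simp [apply_two_of_mem_B13 hp, apply_two_of_mem_B13 hq, h]

noncomputable def pLam (l : ℝ) : Fin 3 → ℝ :=
  fun j ↦ (1/8) * (if j.val = 0 then 5 - l else if j.val = 1 then 3 - l else 2 * l)

lemma pLam_zero (l : ℝ) : pLam l 0 = (5 - l) / 8 := by change 1/8 * (5 - l) = _; ring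
lemma pLam_one (l : ℝ) : pLam l 1 = (3 - l) / 8 := by change 1/8 * (3 - l) = _; ring
lemma pLam_two (l : ℝ) : pLam l 2 = l / 4 := by change 1/8 * (2 * l) = _; ring

lemma pLam_mem_B13 {l : ℝ} (h0 : 0 ≤ l) (h3 : l ≤ 3) : pLam l ∈ B13 := by
  refine ⟨fun j ↦ mul_nonneg (by norm_num) (by split_ifs <;> linarith), ?_, ?_⟩
  · rw [Fin.sum_univ_three, pLam_zero, pLam_one, pLam_two]; ring
  · rw [sum_mul_E13, pLam_zero, pLam_one]; ring

lemma topSum3_pLam_one {l : ℝ} (h1 : 1 ≤ l) (h2 : l ≤ 5 / 3) :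
    topSum3 (pLam l) 1 = (5 - l) / 8 := by
  rw [topSum3_one, pLam_zero, pLam_one, pLam_two,
    max_eq_right (by linarith : (3 - l) / 8 ≤ l / 4), max_eq_left (by linarith)]

lemma topSum3_pLam_two {l : ℝ} (h1 : 1 ≤ l) :
    topSum3 (pLam l) 2 = (5 + l) / 8 := by
  rw [topSum3_two, pLam_zero, pLam_one, pLam_two,
    max_eq_left (by linarith : (3 - l) / 8 + l / 4 ≤ (5 - l) / 8 + l / 4),
    max_eq_right (by linarith)]
  ring

lemma eq_pLam_of_precU3 {l : ℝ} (h1 : 1 ≤ l) (h2 : l ≤ 5 / 3) {q : Fin 3 → ℝ} (hq : q ∈ B13)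
    (hpq : precU3 (pLam l) q) : q = pLam l := by
  have hmax : q 0 ≤ (5 - l) / 8 := by
    rw [← topSum3_pLam_one h1 h2]
    exact (topSum3_one q ▸ le_max_left _ _).trans (hpq 1 le_rfl one_le_two)
  have hpair : q 0 + q 2 ≤ (5 + l) / 8 := by
    rw [← topSum3_pLam_two h1]
    exact (topSum3_two q ▸ le_max_of_le_right (le_max_left _ _)).trans
      (hpq 2 one_le_two le_rfl)
  refine eq_of_mem_B13_of_apply_one_eq hq (pLam_mem_B13 (by linarith) (by linarith)) ?_
  rw [apply_zero_of_mem_B13 hq] at hmax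
  rw [apply_zero_of_mem_B13 hq, apply_two_of_mem_B13 hq] at hpair
  rw [pLam_one]
  linarith

/-- Every `p_λ = (1/8)(5-λ, 3-λ, 2λ)` with `λ ∈ [1, 5/3]` lies in `B` and is
maximal in `(B, ≼_U)`; in particular uncountably many maximal elements exist. -/
theorem uncountably_many_maximal_elements_under_linear_constraint :
    ∀ l ∈ Set.Icc (1:ℝ) (5/3),
      (fun j : Fin 3 => (1/8) * (if j.val = 0 then 5 - l else if j.val = 1 then 3 - l
        else 2 * l)) ∈ B13 ∧
      ¬ ∃ q ∈ B13,
        precU3 (fun j : Fin 3 => (1/8) * (if j.val = 0 then 5 - l else if j.val = 1 then 3 - l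
          else 2 * l)) q ∧
        ¬ precU3 q (fun j : Fin 3 => (1/8) * (if j.val = 0 then 5 - l else if j.val = 1 then 3 - l
          else 2 * l)) := by
  rintro l ⟨h1, h2⟩
  refine ⟨pLam_mem_B13 (by linarith) (by linarith), ?_⟩
  rintro ⟨q, hq, hpq, hqp⟩
  obtain rfl := eq_pLam_of_precU3 h1 h2 hq hpq
  exact hqp (precU3_refl _)
end

section
/- Any preordered space that has a thermodynamic representation is conditionally connected: if x ≼ z and y ≼ z then x and y are comparable. -/
theorem comparable_of_forall_eq_of_rep {X ι : Type*} {le : X → X → Prop} {g : ι → X → ℝ}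
    {s : X → ℝ} (hrep : ∀ x y, le x y ↔ (∀ i, g i x = g i y) ∧ s x ≤ s y) {x y : X}
    (hg : ∀ i, g i x = g i y) : le x y ∨ le y x :=
  (le_total (s x) (s y)).imp (fun h ↦ (hrep x y).mpr ⟨hg, h⟩)
    (fun h ↦ (hrep y x).mpr ⟨fun i ↦ (hg i).symm, h⟩)

theorem thermo_representation_conditionally_connected_general {X : Type*} (le : X → X → Prop)
    (ι : Type*) (g : ι → X → ℝ) (s : X → ℝ)
    (hrep : ∀ x y, le x y ↔ (∀ i, g i x = g i y) ∧ s x ≤ s y) :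
    ∀ x y z, le x z → le y z → le x y ∨ le y x := by
  intro x y z hxz hyz
  have hgx := ((hrep x z).mp hxz).1
  have hgy := ((hrep y z).mp hyz).1
  exact comparable_of_forall_eq_of_rep hrep fun i ↦ (hgx i).trans (hgy i).symm

/-- A preorder with a thermodynamic representation is conditionally connected. -/
theorem thermo_representation_conditionally_connected {X : Type*} (le : X → X → Prop)
    (hrefl : ∀ x, le x x) (htrans : ∀ x y z, le x y → le y z → le x z)
    (ι : Type*) (g : ι → X → ℝ) (s : X → ℝ)
    (hrep : ∀ x y, le x y ↔ (∀ i, g i x = g i y) ∧ s x ≤ s y) :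
    ∀ x y z, le x z → le y z → le x y ∨ le y x :=
  thermo_representation_conditionally_connected_general le ι g s hrep
end

section
/- If a preordered space has a countable thermodynamic representation (g_n)_{n≥0} ∪ {s}, then it has a thermodynamic representation consisting of exactly two functions {g', s}. -/
/-! Since `𝔠 ^ ℵ₀ = 𝔠`, there is an injection `(ℕ → ℝ) ↪ ℝ`; applied to the sequence
`(g n x)ₙ` it gives `g'`. This replaces the explicit weighted sum of indicators of the
sets `{x | q ≤ g n x}`. -/

open Cardinal in
theorem nonempty_embedding_pi_real_of_countable (ι : Type*) [Countable ι] :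
    Nonempty ((ι → ℝ) ↪ ℝ) := by
  have hpow : #(ι → ℝ) ≤ 𝔠 := calc
    #(ι → ℝ) = 𝔠 ^ #ι := by simp only [mk_arrow, mk_real, lift_continuum, lift_uzero]
    _ ≤ 𝔠 ^ ℵ₀ := power_le_power_left continuum_ne_zero mk_le_aleph0
    _ = 𝔠 := continuum_power_aleph0
  rw [← lift_mk_le', mk_real, lift_continuum, lift_uzero]
  exact hpow

theorem exists_real_eq_iff_forall_eq {ι X : Type*} [Countable ι] (g : ι → X → ℝ) :
    ∃ g' : X → ℝ, ∀ x y, g' x = g' y ↔ ∀ i, g i x = g i y := by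
  obtain ⟨f⟩ := nonempty_embedding_pi_real_of_countable ι
  exact ⟨fun x ↦ f fun i ↦ g i x, fun x y ↦ f.injective.eq_iff.trans funext_iff⟩

theorem countable_thermo_representation_reduces_to_two_general {X : Type*} (le : X → X → Prop)
    (g : ℕ → X → ℝ) (s : X → ℝ)
    (hrep : ∀ x y, le x y ↔ (∀ n, g n x = g n y) ∧ s x ≤ s y) :
    ∃ g' : X → ℝ, ∀ x y, le x y ↔ (g' x = g' y ∧ s x ≤ s y) := by
  obtain ⟨g', hg'⟩ := exists_real_eq_iff_forall_eq g
  exact ⟨g', fun x y ↦ by rw [hrep, hg']⟩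

/-- A countable thermodynamic representation can be reduced to a thermodynamic
representation consisting of exactly two functions. -/
theorem countable_thermo_representation_reduces_to_two {X : Type*} (le : X → X → Prop)
    (hrefl : ∀ x, le x x) (htrans : ∀ x y z, le x y → le y z → le x z)
    (g : ℕ → X → ℝ) (s : X → ℝ)
    (hrep : ∀ x y, le x y ↔ (∀ n, g n x = g n y) ∧ s x ≤ s y) :
    ∃ g' : X → ℝ, ∀ x y, le x y ↔ (g' x = g' y ∧ s x ≤ s y) :=
  countable_thermo_representation_reduces_to_two_general le g s hrep
end

section
/- In a conditionally connected dcpo P, if B is a weak basis and x ∈ P has a nontrivial directed set in P (a directed A ⊆ P∖{x} with ⊔A = x), then x has a nontrivial directed set contained in B (a directed B_x ⊆ B∖{x} with ⊔B_x = x). -/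
/-!
Glue together, for each `a ∈ A`, a basis approximant `B_a` of `a`. The union has supremum
`⊔A = x`, and it lies strictly below `x`, since each of its elements is below some `a ∈ A` and
`a < x` as `x ∉ A`. Conditional connectedness makes any set bounded above a chain, so the union
is directed.
-/

open Set

def ConditionallyConnected (P : Type*) [LE P] : Prop :=
  ∀ x y z : P, x ≤ z → y ≤ z → x ≤ y ∨ y ≤ x

theorem ConditionallyConnected.isChain_of_subset_Iic {P : Type*} [Preorder P]
    (hcc : ConditionallyConnected P) {S : Set P} {x : P} (hS : S ⊆ Iic x) :
    IsChain (· ≤ ·) S :=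
  fun _ ha _ hb _ => hcc _ _ x (hS ha) (hS hb)

section biUnion

variable {α : Type*} [PartialOrder α] {A : Set α} {s : α → Set α} {x : α}

theorem isLUB_biUnion_of_isLUB (hs : ∀ a ∈ A, IsLUB (s a) a) (hA : IsLUB A x) :
    IsLUB (⋃ a ∈ A, s a) x := by
  rw [biUnion_eq_iUnion]
  refine (isLUB_iUnion_iff_of_isLUB (fun a : A => hs a a.2) x).1 ?_
  rwa [Subtype.range_coe]

theorem biUnion_subset_Iio_of_isLUB_of_notMem (hs : ∀ a ∈ A, s a ⊆ Iic a) (hA : IsLUB A x)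
    (hx : x ∉ A) : ⋃ a ∈ A, s a ⊆ Iio x := by
  simp only [iUnion_subset_iff]
  intro a ha c hc
  have hax : a < x := (hA.1 ha).lt_of_ne fun hax => hx (hax ▸ ha)
  exact (hs a ha hc).trans_lt hax

end biUnion

theorem nontrivial_directed_set_in_weak_basis_general {P : Type*} [PartialOrder P]
    (hcc : ∀ x y z : P, x ≤ z → y ≤ z → x ≤ y ∨ y ≤ x)
    (B : Set P)
    (hweak : ∀ x : P, ∃ Bx ⊆ B, Bx.Nonempty ∧ DirectedOn (· ≤ ·) Bx ∧ IsLUB Bx x)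
    (x : P) (A : Set P) (hAx : x ∉ A) (hAne : A.Nonempty)
    (hAsup : IsLUB A x) :
    ∃ Bx ⊆ B, x ∉ Bx ∧ Bx.Nonempty ∧ DirectedOn (· ≤ ·) Bx ∧ IsLUB Bx x := by
  choose Ba hBaB hBane _ hBalub using hweak
  have hbelow : ⋃ a ∈ A, Ba a ⊆ Iio x :=
    biUnion_subset_Iio_of_isLUB_of_notMem (fun a _ => (hBalub a).1) hAsup hAx
  obtain ⟨a, ha⟩ := hAne
  have hchain : IsChain (· ≤ ·) (⋃ a ∈ A, Ba a) :=
    ConditionallyConnected.isChain_of_subset_Iic hcc (hbelow.trans Iio_subset_Iic_self)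
  exact ⟨⋃ a ∈ A, Ba a, iUnion₂_subset fun a _ => hBaB a, fun hx => lt_irrefl x (hbelow hx),
    (hBane a).mono (subset_biUnion_of_mem ha), hchain.directedOn,
    isLUB_biUnion_of_isLUB (fun a _ => hBalub a) hAsup⟩

/-- In a conditionally connected dcpo with weak basis `B`, any element with a
nontrivial directed set in `P` has a nontrivial directed set contained in `B`. -/
theorem nontrivial_directed_set_in_weak_basis {P : Type*} [PartialOrder P]
    (hdcpo : ∀ A : Set P, A.Nonempty → DirectedOn (· ≤ ·) A → ∃ a, IsLUB A a)
    (hcc : ∀ x y z : P, x ≤ z → y ≤ z → x ≤ y ∨ y ≤ x)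
    (B : Set P)
    (hweak : ∀ x : P, ∃ Bx ⊆ B, Bx.Nonempty ∧ DirectedOn (· ≤ ·) Bx ∧ IsLUB Bx x)
    (x : P) (A : Set P) (hAx : x ∉ A) (hAne : A.Nonempty)
    (hAdir : DirectedOn (· ≤ ·) A) (hAsup : IsLUB A x) :
    ∃ Bx ⊆ B, x ∉ Bx ∧ Bx.Nonempty ∧ DirectedOn (· ≤ ·) Bx ∧ IsLUB Bx x :=
  nontrivial_directed_set_in_weak_basis_general hcc B hweak x A hAx hAne hAsup
end

section
/- Consider X = ℝ∖{0} with x ≼ y iff u₁(x) ≤ u₁(y) and u₂(x) ≤ u₂(y), where u₁(x) = x, u₂(x) = 1/x for x > 0 and u₂(x) = −1/|x| for x < 0. Then {u₁, u₂} is a finite strict monotone multi-utility for (X,≼), yet every Debreu dense subset of X is uncountable. -/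
/-!
Since `u₂(x) = x⁻¹`, two distinct points of the same sign are incomparable (`u₁` and `u₂` move in
opposite directions there), so `x ≺ y` holds exactly when `x < 0 < y`. Strict monotonicity of `u₁`
and `u₂` is then immediate. A point `d` with `x ≼ d ≼ y` for `x < 0 < y` must be `x` or `y`, so a
Debreu dense set contains either every negative or every positive real, and is uncountable.
-/

/-- The ground set `ℝ \ {0}`. -/
def X19 : Type := {x : ℝ // x ≠ 0}

/-- `u₁(x) = x`. -/
def u191 (x : X19) : ℝ := x.1

/-- `u₂(x) = 1/x` for `x > 0` and `u₂(x) = -1/|x|` for `x < 0`. -/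
noncomputable def u192 (x : X19) : ℝ := if 0 < x.1 then 1 / x.1 else -(1 / |x.1|)

/-- The partial order defined by the pair `{u₁, u₂}`. -/
noncomputable def le19 (x y : X19) : Prop := u191 x ≤ u191 y ∧ u192 x ≤ u192 y

open Set Cardinal

def IsDebreuDense {α : Type*} (r : α → α → Prop) (D : Set α) : Prop :=
  ∀ x y, r x y → ¬ r y x → ∃ d ∈ D, r x d ∧ r d y

theorem Set.not_countable_of_mk_eq_continuum {α : Type*} {s : Set α} (h : #s = 𝔠) :
    ¬ s.Countable := fun hs => (h ▸ hs.le_aleph0).not_gt aleph0_lt_continuum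

theorem u192_eq_inv (x : X19) : u192 x = x.1⁻¹ := by
  rcases x.2.lt_or_gt with hneg | hpos
  · simp [u192, hneg.not_gt, abs_of_neg hneg, inv_neg]
  · simp [u192, hpos]

theorem le19_iff_eq_or_neg_pos (x y : X19) : le19 x y ↔ x = y ∨ (x.1 < 0 ∧ 0 < y.1) := by
  simp only [le19, u191, u192_eq_inv]
  constructor
  · rintro ⟨hle, hinv⟩
    refine or_iff_not_imp_left.2 fun hne => ?_
    have hlt : x.1 < y.1 := hle.lt_of_ne (Subtype.val_injective.ne hne)
    rcases x.2.lt_or_gt with hx | hx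
    · rcases y.2.lt_or_gt with hy | hy
      · exact absurd hinv (inv_lt_inv_of_neg hy hx |>.2 hlt).not_ge
      · exact ⟨hx, hy⟩
    · exact absurd hinv (inv_strictAnti₀ hx hlt).not_ge
  · rintro (rfl | ⟨hx, hy⟩)
    · exact ⟨le_rfl, le_rfl⟩
    · exact ⟨(hx.trans hy).le, ((inv_neg''.2 hx).trans (inv_pos.2 hy)).le⟩

theorem le19_not_le19_iff (x y : X19) : le19 x y ∧ ¬ le19 y x ↔ x.1 < 0 ∧ 0 < y.1 := by
  simp only [le19_iff_eq_or_neg_pos]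
  constructor
  · rintro ⟨rfl | hxy, hyx⟩
    · exact absurd (Or.inl rfl) hyx
    · exact hxy
  · intro hxy
    refine ⟨Or.inr hxy, ?_⟩
    rintro (rfl | ⟨hy, -⟩)
    · exact hxy.1.not_gt hxy.2
    · exact hy.not_gt hxy.2

theorem mem_or_mem_of_isDebreuDense {D : Set X19} (hD : IsDebreuDense le19 D) {x y : X19}
    (hx : x.1 < 0) (hy : 0 < y.1) : x ∈ D ∨ y ∈ D := by
  obtain ⟨hxy, hyx⟩ := (le19_not_le19_iff x y).2 ⟨hx, hy⟩
  obtain ⟨d, hdD, hxd, hdy⟩ := hD x y hxy hyx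
  rw [le19_iff_eq_or_neg_pos] at hxd hdy
  rcases hxd with rfl | ⟨-, hd⟩
  · exact Or.inl hdD
  rcases hdy with rfl | ⟨hd', -⟩
  · exact Or.inr hdD
  · exact absurd hd hd'.not_gt

theorem Iio_subset_or_Ioi_subset_image_of_isDebreuDense {D : Set X19}
    (hD : IsDebreuDense le19 D) : Iio 0 ⊆ Subtype.val '' D ∨ Ioi 0 ⊆ Subtype.val '' D := by
  by_contra! h
  obtain ⟨a, ha, haD⟩ := not_subset.1 h.1
  obtain ⟨b, hb, hbD⟩ := not_subset.1 h.2
  rcases mem_or_mem_of_isDebreuDense hD (x := ⟨a, (mem_Iio.1 ha).ne⟩) (y := ⟨b, (mem_Ioi.1 hb).ne'⟩)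
      ha hb with hx | hy
  · exact haD ⟨_, hx, rfl⟩
  · exact hbD ⟨_, hy, rfl⟩

/-- `{u₁, u₂}` is a finite strict monotone multi-utility for `(ℝ \ {0}, ≼)`, yet
every Debreu dense subset is uncountable. -/
theorem strict_monotone_multiutility_but_no_countable_debreu_dense :
    ((∀ x y, le19 x y ↔ (u191 x ≤ u191 y ∧ u192 x ≤ u192 y)) ∧
      (∀ x y, le19 x y → ¬ le19 y x → u191 x < u191 y) ∧
      (∀ x y, le19 x y → ¬ le19 y x → u192 x < u192 y)) ∧
    (∀ D : Set X19,
      (∀ x y, le19 x y → ¬ le19 y x → ∃ d ∈ D, le19 x d ∧ le19 d y) → ¬ D.Countable) := by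
  refine ⟨⟨fun x y => Iff.rfl, fun x y hxy hyx => ?_, fun x y hxy hyx => ?_⟩, fun D hD hDc => ?_⟩
  · obtain ⟨hx, hy⟩ := (le19_not_le19_iff x y).1 ⟨hxy, hyx⟩
    exact hx.trans hy
  · obtain ⟨hx, hy⟩ := (le19_not_le19_iff x y).1 ⟨hxy, hyx⟩
    rw [u192_eq_inv, u192_eq_inv]
    exact (inv_neg''.2 hx).trans (inv_pos.2 hy)
  · rcases Iio_subset_or_Ioi_subset_image_of_isDebreuDense hD with hneg | hpos
    · exact not_countable_of_mk_eq_continuum (mk_Iio_real 0) ((hDc.image _).mono hneg)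
    · exact not_countable_of_mk_eq_continuum (mk_Ioi_real 0) ((hDc.image _).mono hpos)
end
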